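/- arXiv:2005.13274 — 2 statements merged into one kernel-verified Lean document; each statement's English description precedes it below -/
import Mathlib

section
/- Let {s_T(j) : j ∈ N_T} be random variables and weights w_{j,N} ≥ 0 with Σ_j w_{j,N} = 1 and Σ_j w²_{j,N} → 0. Suppose sup_{j} |P(s_T(j) ≤ z) − Φ(z)| → 0 and sup_{j₁≠j₂} |P(s_T(j₁) ≤ z, s_T(j₂) ≤ z) − Φ(z)²| → 0 for each fixed z. Then Σ_{j∈N} w_{j,N} 𝟙{s_T(j) ≤ z} → Φ(z) in probability for each z, and by continuity of Φ the convergence holds uniformly in z: sup_z |Σ_j w_{j,N} 𝟙{s_T(j) ≤ z} − Φ(z)| → 0 in probability. -/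
/-!
Fix `z`, put `Φ = stdNormalCDF z`, `A_j = {s_n(j) ≤ z}` and `X_n = Σ_j w_j 𝟙_{A_j}`.
Expanding the square, `E (X_n - Φ)² = Σ_{j,k} w_j w_k P(A_j ∩ A_k) - 2Φ Σ_j w_j P(A_j) + Φ²`;
off the diagonal the joint probabilities are within `δ` of `Φ²`, on the diagonal they are at
most `1`, so the second moment is at most `δ (1 + 2Φ) + Σ_j w_j² → 0`, and Chebyshev gives
convergence in probability.

Uniformity is Pólya's argument: since `Φ` is a continuous distribution function, finitely many
points cut the line into two tails of mass `< δ` and pieces on which `Φ` grows by `< δ`. Both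
`z ↦ X_n(z)` and `Φ` are monotone with values in `[0, 1]`, so closeness within `δ` at those
points gives closeness within `2δ` everywhere, and the exceptional event is a finite union of
events whose probabilities tend to `0`.
-/

open MeasureTheory Real Filter Finset

noncomputable def stdNormalCDF (z : ℝ) : ℝ :=
  ∫ t in Set.Iic z, Real.exp (-t ^ 2 / 2) / Real.sqrt (2 * Real.pi)

open ProbabilityTheory Topology

lemma stdNormalCDF_eq_cdf_gaussianReal : stdNormalCDF = cdf (gaussianReal 0 1) := by
  ext z
  rw [cdf_eq_real, measureReal_def, gaussianReal_apply_eq_integral _ one_ne_zero,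
    ENNReal.toReal_ofReal (setIntegral_nonneg measurableSet_Iic fun x _ ↦
      gaussianPDFReal_nonneg _ _ x)]
  simp [stdNormalCDF, gaussianPDFReal_def, div_eq_inv_mul]

lemma ProbabilityTheory.continuous_cdf (μ : Measure ℝ) [IsProbabilityMeasure μ]
    [NullSingletonClass μ] : Continuous (cdf μ) := by
  refine continuous_iff_continuousAt.2 fun a ↦ ?_
  rw [(cdf μ).mono.continuousAt_iff_leftLim_eq_rightLim, StieltjesFunction.rightLim_eq]
  have h := (cdf μ).measure_singleton a
  rw [measure_cdf, measure_singleton, eq_comm, ENNReal.ofReal_eq_zero, sub_nonpos] at h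
  exact le_antisymm ((cdf μ).mono.leftLim_le le_rfl) h

lemma ContinuousAt.exists_sub_lt_of_lt_of_gt {f : ℝ → ℝ} {y : ℝ} (hf : ContinuousAt f y) {δ : ℝ}
    (hδ : 0 < δ) : ∃ l < y, ∃ u > y, f u - f l < δ := by
  have hnear : ∀ᶠ x in 𝓝 y, |f x - f y| < δ / 2 :=
    (Metric.tendsto_nhds.1 hf) (δ / 2) (half_pos hδ) |>.mono fun _ h ↦ by rwa [Real.dist_eq] at h
  obtain ⟨l, hl, hfl⟩ := ((hnear.filter_mono nhdsWithin_le_nhds).and self_mem_nhdsWithin).exists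
    (f := 𝓝[<] y)
  obtain ⟨u, hu, hfu⟩ := ((hnear.filter_mono nhdsWithin_le_nhds).and self_mem_nhdsWithin).exists
    (f := 𝓝[>] y)
  exact ⟨l, hfl, u, hfu, by linarith [(abs_lt.1 hl).1, (abs_lt.1 hu).2]⟩

lemma exists_finset_forall_abs_sub_cdf_lt {μ : Measure ℝ} [IsProbabilityMeasure μ]
    (hμ : Continuous (cdf μ)) {δ : ℝ} (hδ : 0 < δ) :
    ∃ T : Finset ℝ, ∀ G : ℝ → ℝ, Monotone G → (∀ z, G z ∈ Set.Icc 0 1) →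
      (∀ t ∈ T, |G t - cdf μ t| < δ) → ∀ z, |G z - cdf μ z| < 2 * δ := by
  obtain ⟨a, ha⟩ := ((tendsto_cdf_atBot μ).eventually (gt_mem_nhds hδ)).exists
  obtain ⟨b, hb⟩ :=
    ((tendsto_cdf_atTop μ).eventually (lt_mem_nhds (by linarith : 1 - δ < 1))).exists
  choose l hl u hu hlu using fun y ↦ (hμ.continuousAt (x := y)).exists_sub_lt_of_lt_of_gt hδ
  obtain ⟨S, hS⟩ := (isCompact_Icc (a := a) (b := b)).elim_finite_subcover
    (fun y ↦ Set.Ioo (l y) (u y)) (fun _ ↦ isOpen_Ioo) fun y _ ↦ Set.mem_iUnion.2 ⟨y, hl y, hu y⟩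
  refine ⟨insert a (insert b (S.image l ∪ S.image u)), fun G hG hG01 hGT z ↦ ?_⟩
  have hGF : ∀ t ∈ insert a (insert b (S.image l ∪ S.image u)),
      cdf μ t - δ < G t ∧ G t < cdf μ t + δ :=
    fun t ht ↦ abs_sub_lt_iff.1 (hGT t ht) |>.symm.imp (by intro; linarith) (by intro; linarith)
  have hF0 := cdf_nonneg μ z
  have hF1 := cdf_le_one μ z
  obtain ⟨hG0, hG1⟩ := hG01 z
  rw [abs_lt]
  rcases le_or_gt z a with hza | haz
  · have := hGF a (mem_insert_self _ _)
    have := hG hza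
    have := (cdf μ).mono hza
    constructor <;> linarith
  rcases le_or_gt b z with hbz | hzb
  · have := hGF b (mem_insert_of_mem (mem_insert_self _ _))
    have := hG hbz
    have := (cdf μ).mono hbz
    constructor <;> linarith
  obtain ⟨y, hly, hyS, hyu⟩ : ∃ y, l y < z ∧ y ∈ S ∧ z < u y := by
    simpa using hS ⟨haz.le, hzb.le⟩
  have := hGF (l y) <| mem_insert_of_mem <| mem_insert_of_mem <| mem_union_left _ <|
    mem_image_of_mem l hyS
  have := hGF (u y) <| mem_insert_of_mem <| mem_insert_of_mem <| mem_union_right _ <|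
    mem_image_of_mem u hyS
  have := hlu y
  have := hG hly.le
  have := hG hyu.le
  have := (cdf μ).mono hly.le
  have := (cdf μ).mono hyu.le
  constructor <;> linarith

section WeightedECDF

variable {ι : Type*} {N : Finset ι} {w : ι → ℝ} {x : ι → ℝ}

noncomputable def weightedECDF (N : Finset ι) (w : ι → ℝ) (x : ι → ℝ) (z : ℝ) : ℝ :=
  ∑ j ∈ N, w j * if x j ≤ z then 1 else 0

lemma monotone_weightedECDF (hw0 : ∀ j, 0 ≤ w j) : Monotone (weightedECDF N w x) :=
  fun _ _ hz ↦ sum_le_sum fun j _ ↦ mul_le_mul_of_nonneg_left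
    (by split_ifs with h h' <;> first | exact absurd (h.trans hz) h' | norm_num) (hw0 j)

lemma weightedECDF_mem_Icc (hw0 : ∀ j, 0 ≤ w j) (hw1 : ∑ j ∈ N, w j = 1) (z : ℝ) :
    weightedECDF N w x z ∈ Set.Icc 0 1 := by
  refine ⟨sum_nonneg fun j _ ↦ mul_nonneg (hw0 j) (by split_ifs <;> norm_num), hw1 ▸ ?_⟩
  exact sum_le_sum fun j _ ↦ mul_le_of_le_one_right (hw0 j) (by split_ifs <;> norm_num)

lemma weightedECDF_eq_sum_mul_indicator_one {Ω : Type*} (X : ι → Ω → ℝ) (ω : Ω) (z : ℝ) :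
    weightedECDF N w (fun j ↦ X j ω) z = ∑ j ∈ N, w j * {ω' | X j ω' ≤ z}.indicator 1 ω := by
  simp [weightedECDF, Set.indicator_apply]

end WeightedECDF

section WeightedIndicators

variable {Ω κ : Type*} [MeasurableSpace Ω] {P : Measure Ω} [IsFiniteMeasure P]

lemma integrable_mul_indicator_one (a : ℝ) {B : Set Ω} (hB : MeasurableSet B) :
    Integrable (fun ω ↦ a * B.indicator 1 ω) P :=
  ((integrable_const 1 : Integrable (1 : Ω → ℝ) P).indicator hB).const_mul a

lemma integrable_sum_mul_indicator_one (s : Finset κ) (a : κ → ℝ) {B : κ → Set Ω}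
    (hB : ∀ k, MeasurableSet (B k)) :
    Integrable (fun ω ↦ ∑ k ∈ s, a k * (B k).indicator 1 ω) P :=
  integrable_finsetSum _ fun k _ ↦ integrable_mul_indicator_one (a k) (hB k)

lemma integral_sum_mul_indicator_one (s : Finset κ) (a : κ → ℝ) {B : κ → Set Ω}
    (hB : ∀ k, MeasurableSet (B k)) :
    ∫ ω, ∑ k ∈ s, a k * (B k).indicator 1 ω ∂P = ∑ k ∈ s, a k * P.real (B k) := by
  rw [integral_finsetSum _ fun k _ ↦ integrable_mul_indicator_one (a k) (hB k)]
  simp_rw [integral_const_mul, integral_indicator_one (hB _)]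

end WeightedIndicators

section SecondMoment

variable {Ω ι : Type*} {N : Finset ι} {w : ι → ℝ} {A : ι → Set Ω}

lemma sq_sum_mul_indicator_one_sub (ω : Ω) (c : ℝ) :
    (∑ j ∈ N, w j * (A j).indicator 1 ω - c) ^ 2 =
      ∑ p ∈ N ×ˢ N, w p.1 * w p.2 * (A p.1 ∩ A p.2).indicator 1 ω
        - 2 * c * ∑ j ∈ N, w j * (A j).indicator 1 ω + c ^ 2 := by
  have hsq : (∑ j ∈ N, w j * (A j).indicator 1 ω) ^ 2 =
      ∑ p ∈ N ×ˢ N, w p.1 * w p.2 * (A p.1 ∩ A p.2).indicator 1 ω := by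
    simp_rw [sq, sum_mul_sum, sum_product, Set.inter_indicator_one, Pi.mul_apply]
    exact sum_congr rfl fun _ _ ↦ sum_congr rfl fun _ _ ↦ by ring
  rw [sub_sq, hsq]
  ring

variable [MeasurableSpace Ω] {P : Measure Ω} [IsProbabilityMeasure P]

lemma integrable_sq_sum_mul_indicator_one_sub (hA : ∀ j, MeasurableSet (A j)) (c : ℝ) :
    Integrable (fun ω ↦ (∑ j ∈ N, w j * (A j).indicator 1 ω - c) ^ 2) P := by
  have hX := integrable_sum_mul_indicator_one (P := P) N w hA
  have hY := integrable_sum_mul_indicator_one (P := P) (N ×ˢ N) (fun p ↦ w p.1 * w p.2)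
    fun p ↦ (hA p.1).inter (hA p.2)
  simp_rw [sq_sum_mul_indicator_one_sub]
  fun_prop

lemma integral_sq_sum_mul_indicator_one_sub (hA : ∀ j, MeasurableSet (A j)) (c : ℝ) :
    ∫ ω, (∑ j ∈ N, w j * (A j).indicator 1 ω - c) ^ 2 ∂P =
      ∑ p ∈ N ×ˢ N, w p.1 * w p.2 * P.real (A p.1 ∩ A p.2)
        - 2 * c * ∑ j ∈ N, w j * P.real (A j) + c ^ 2 := by
  have hA₂ : ∀ p : ι × ι, MeasurableSet (A p.1 ∩ A p.2) := fun p ↦ (hA p.1).inter (hA p.2)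
  have hX := integrable_sum_mul_indicator_one (P := P) N w hA
  have hY := integrable_sum_mul_indicator_one (P := P) (N ×ˢ N) (fun p ↦ w p.1 * w p.2) hA₂
  simp_rw [sq_sum_mul_indicator_one_sub]
  rw [integral_add (by fun_prop) (integrable_const _), integral_sub hY (hX.const_mul _),
    integral_const_mul, integral_sum_mul_indicator_one _ _ hA₂,
    integral_sum_mul_indicator_one _ _ hA, integral_const, probReal_univ, one_smul]

lemma integral_sq_sum_mul_indicator_one_sub_le (hA : ∀ j, MeasurableSet (A j))
    (hw0 : ∀ j, 0 ≤ w j) (hw1 : ∑ j ∈ N, w j = 1) {c δ : ℝ} (hc : 0 ≤ c) (hδ : 0 ≤ δ)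
    (h1 : ∀ j ∈ N, |P.real (A j) - c| ≤ δ)
    (h2 : ∀ j ∈ N, ∀ k ∈ N, j ≠ k → |P.real (A j ∩ A k) - c ^ 2| ≤ δ) :
    ∫ ω, (∑ j ∈ N, w j * (A j).indicator 1 ω - c) ^ 2 ∂P ≤
      δ * (1 + 2 * c) + ∑ j ∈ N, w j ^ 2 := by
  classical
  have hpair : ∑ p ∈ N ×ˢ N, w p.1 * w p.2 * P.real (A p.1 ∩ A p.2) ≤
      c ^ 2 + δ + ∑ j ∈ N, w j ^ 2 :=
    calc ∑ p ∈ N ×ˢ N, w p.1 * w p.2 * P.real (A p.1 ∩ A p.2)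
        ≤ ∑ p ∈ N ×ˢ N, w p.1 * w p.2 * (c ^ 2 + δ + if p.1 = p.2 then 1 else 0) := by
          refine sum_le_sum fun p hp ↦ mul_le_mul_of_nonneg_left ?_
            (mul_nonneg (hw0 _) (hw0 _))
          obtain ⟨hp₁, hp₂⟩ := mem_product.1 hp
          split_ifs with hdiag
          · linarith [measureReal_le_one (μ := P) (s := A p.1 ∩ A p.2), sq_nonneg c]
          · linarith [(abs_le.1 (h2 _ hp₁ _ hp₂ hdiag)).2]
      _ = c ^ 2 + δ + ∑ j ∈ N, w j ^ 2 := by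
          simp only [mul_add, sum_add_distrib, ← sum_mul, mul_ite, mul_one, mul_zero, sum_product]
          rw [← sum_mul_sum, hw1]
          simp [sum_ite_eq, sq]
  have hmean : c - δ ≤ ∑ j ∈ N, w j * P.real (A j) :=
    calc c - δ = ∑ j ∈ N, w j * (c - δ) := by rw [← sum_mul, hw1, one_mul]
      _ ≤ ∑ j ∈ N, w j * P.real (A j) := sum_le_sum fun j hj ↦
          mul_le_mul_of_nonneg_left (by linarith [(abs_le.1 (h1 j hj)).1]) (hw0 j)
  rw [integral_sq_sum_mul_indicator_one_sub hA]
  nlinarith [mul_le_mul_of_nonneg_left hmean (by positivity : 0 ≤ 2 * c)]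

end SecondMoment

section Convergence

variable {Ω : Type*} [MeasurableSpace Ω] {P : Measure Ω}

lemma tendstoInMeasure_const_of_tendsto_integral_sq_sub [IsFiniteMeasure P] {κ : Type*}
    {l : Filter κ} {X : κ → Ω → ℝ} {c : ℝ} (hint : ∀ n, Integrable (fun ω ↦ (X n ω - c) ^ 2) P)
    (h : Tendsto (fun n ↦ ∫ ω, (X n ω - c) ^ 2 ∂P) l (𝓝 0)) :
    TendstoInMeasure P X l fun _ ↦ c := by
  rw [tendstoInMeasure_iff_measureReal_dist]
  intro ε hε
  refine squeeze_zero (fun _ ↦ measureReal_nonneg) (fun n ↦ ?_)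
    (by simpa using h.div_const (ε ^ 2))
  rw [le_div_iff₀ (by positivity), mul_comm]
  calc ε ^ 2 * P.real {ω | ε ≤ dist (X n ω) c}
      ≤ ε ^ 2 * P.real {ω | ε ^ 2 ≤ (X n ω - c) ^ 2} := by
        refine mul_le_mul_of_nonneg_left (measureReal_mono fun ω hω ↦ ?_) (sq_nonneg ε)
        rw [Set.mem_ofPred_eq, Real.dist_eq] at hω
        exact (sq_le_sq₀ hε.le (hε.le.trans hω)).2 hω |>.trans_eq (sq_abs _)
    _ ≤ ∫ ω, (X n ω - c) ^ 2 ∂P :=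
        mul_meas_ge_le_integral_of_nonneg (ae_of_all _ fun _ ↦ sq_nonneg _) (hint n) _

lemma tendsto_measure_iSup_abs_sub_cdf_ge {κ : Type*} {l : Filter κ} {μ : Measure ℝ}
    [IsProbabilityMeasure μ] (hμ : Continuous (cdf μ)) {G : κ → Ω → ℝ → ℝ}
    (hG : ∀ n ω, Monotone (G n ω)) (hG01 : ∀ n ω z, G n ω z ∈ Set.Icc 0 1)
    (hpt : ∀ z, TendstoInMeasure P (fun n ω ↦ G n ω z) l fun _ ↦ cdf μ z)
    {ε : ℝ} (hε : 0 < ε) :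
    Tendsto (fun n ↦ P {ω | ε ≤ ⨆ z, |G n ω z - cdf μ z|}) l (𝓝 0) := by
  obtain ⟨T, hT⟩ := exists_finset_forall_abs_sub_cdf_lt hμ (by positivity : 0 < ε / 3)
  have hsub : ∀ n, {ω | ε ≤ ⨆ z, |G n ω z - cdf μ z|} ⊆
      ⋃ t ∈ T, {ω | ε / 3 ≤ dist (G n ω t) (cdf μ t)} := by
    intro n ω hω
    by_contra hnot
    simp only [Set.mem_iUnion, Set.mem_ofPred_eq, Real.dist_eq, not_exists, not_le] at hnot
    have hsup : ⨆ z, |G n ω z - cdf μ z| ≤ 2 * (ε / 3) :=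
      ciSup_le fun z ↦ (hT (G n ω) (hG n ω) (hG01 n ω) hnot z).le
    linarith [hω.out]
  have hsum := tendsto_finsetSum T fun t _ ↦ tendstoInMeasure_iff_dist.1 (hpt t) _
    (by positivity : 0 < ε / 3)
  rw [sum_const_zero] at hsum
  exact tendsto_of_tendsto_of_tendsto_of_le_of_le tendsto_const_nhds hsum (fun _ ↦ zero_le)
    fun n ↦ (measure_mono (hsub n)).trans (measure_biUnion_finset_le _ _)

variable [IsProbabilityMeasure P] {ι : Type*}

lemma tendstoInMeasure_sum_mul_indicator_one {N : ℕ → Finset ι} {w : ℕ → ι → ℝ}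
    {A : ℕ → ι → Set Ω} (hA : ∀ n j, MeasurableSet (A n j)) (hw0 : ∀ n j, 0 ≤ w n j)
    (hw1 : ∀ n, ∑ j ∈ N n, w n j = 1)
    (hw2 : Tendsto (fun n ↦ ∑ j ∈ N n, w n j ^ 2) atTop (𝓝 0)) {c : ℝ} (hc : 0 ≤ c)
    (h1 : ∀ ε > (0 : ℝ), ∃ M : ℕ, ∀ n ≥ M, ∀ j ∈ N n, |P.real (A n j) - c| ≤ ε)
    (h2 : ∀ ε > (0 : ℝ), ∃ M : ℕ, ∀ n ≥ M, ∀ j ∈ N n, ∀ k ∈ N n, j ≠ k →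
      |P.real (A n j ∩ A n k) - c ^ 2| ≤ ε) :
    TendstoInMeasure P (fun n ω ↦ ∑ j ∈ N n, w n j * (A n j).indicator 1 ω) atTop
      fun _ ↦ c := by
  refine tendstoInMeasure_const_of_tendsto_integral_sq_sub
    (fun n ↦ integrable_sq_sum_mul_indicator_one_sub (hA n) c) ?_
  rw [Metric.tendsto_atTop]
  intro η hη
  set δ := η / (2 * (1 + 2 * c))
  have hδ : 0 < δ := by positivity
  obtain ⟨M₁, hM₁⟩ := h1 δ hδ
  obtain ⟨M₂, hM₂⟩ := h2 δ hδ
  obtain ⟨M₃, hM₃⟩ := (hw2.eventually (gt_mem_nhds (half_pos hη))).exists_forall_of_atTop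
  refine ⟨max M₁ (max M₂ M₃), fun n hn ↦ ?_⟩
  have hbound := integral_sq_sum_mul_indicator_one_sub_le (P := P) (hA n) (hw0 n) (hw1 n) hc
    hδ.le (hM₁ n (le_of_max_le_left hn)) (hM₂ n (le_of_max_le_left (le_of_max_le_right hn)))
  have hδc : δ * (1 + 2 * c) = η / 2 := by simp only [δ]; field_simp
  rw [Real.dist_eq, sub_zero, abs_of_nonneg (integral_nonneg fun _ ↦ sq_nonneg _)]
  linarith [hM₃ n (le_of_max_le_right (le_of_max_le_right hn))]

end Convergence

/-- Weighted empirical CDF convergence: if the one- and two-dimensional distributions of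
`s_T(j)` are uniformly asymptotically (independent) standard normal and the weights satisfy
`Σ w = 1`, `Σ w² → 0`, then `Σ_j w_j 𝟙{s_T(j) ≤ z} → Φ(z)` in probability for each `z`, and
uniformly in `z`. -/
theorem weighted_empirical_cdf_convergence {Ω ι : Type*} [MeasurableSpace Ω]
    (P : Measure Ω) [IsProbabilityMeasure P]
    (N : ℕ → Finset ι) (s : ℕ → ι → Ω → ℝ) (w : ℕ → ι → ℝ)
    (hmeas : ∀ n j, Measurable (s n j))
    (hw0 : ∀ n j, 0 ≤ w n j)
    (hw1 : ∀ n, ∑ j ∈ N n, w n j = 1)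
    (hw2 : Tendsto (fun n => ∑ j ∈ N n, (w n j) ^ 2) atTop (nhds 0))
    (h1 : ∀ z : ℝ, ∀ ε > (0 : ℝ), ∃ M : ℕ, ∀ n ≥ M, ∀ j ∈ N n,
      |(P {ω | s n j ω ≤ z}).toReal - stdNormalCDF z| ≤ ε)
    (h2 : ∀ z : ℝ, ∀ ε > (0 : ℝ), ∃ M : ℕ, ∀ n ≥ M, ∀ j₁ ∈ N n, ∀ j₂ ∈ N n, j₁ ≠ j₂ →
      |(P {ω | s n j₁ ω ≤ z ∧ s n j₂ ω ≤ z}).toReal - (stdNormalCDF z) ^ 2| ≤ ε) :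
    (∀ z : ℝ, ∀ ε > (0 : ℝ),
      Tendsto (fun n =>
          P {ω | ε ≤ |(∑ j ∈ N n, w n j * (if s n j ω ≤ z then 1 else 0)) -
            stdNormalCDF z|}) atTop (nhds 0)) ∧
    (∀ ε > (0 : ℝ),
      Tendsto (fun n =>
          P {ω | ε ≤ ⨆ z : ℝ, |(∑ j ∈ N n, w n j * (if s n j ω ≤ z then 1 else 0)) -
            stdNormalCDF z|}) atTop (nhds 0)) := by
  have : NullSingletonClass (gaussianReal 0 1) := nullSingletonClass_gaussianReal one_ne_zero
  rw [stdNormalCDF_eq_cdf_gaussianReal] at h1 h2 ⊢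
  have hpt : ∀ z, TendstoInMeasure P (fun n ω ↦ weightedECDF (N n) (w n) (fun j ↦ s n j ω) z)
      atTop fun _ ↦ cdf (gaussianReal 0 1) z := fun z ↦ by
    simp_rw [weightedECDF_eq_sum_mul_indicator_one]
    exact tendstoInMeasure_sum_mul_indicator_one
      (fun n j ↦ measurableSet_le (hmeas n j) measurable_const) hw0 hw1 hw2 (cdf_nonneg _ z)
      (h1 z) (h2 z)
  exact ⟨fun z ε hε ↦ tendstoInMeasure_iff_dist.1 (hpt z) ε hε,
    fun ε hε ↦ tendsto_measure_iSup_abs_sub_cdf_ge (continuous_cdf _)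
      (fun n _ ↦ monotone_weightedECDF (hw0 n)) (fun n _ ↦ weightedECDF_mem_Icc (hw0 n) (hw1 n))
      hpt hε⟩
end

section
/- Let γ : ℤ² → ℝ be absolutely summable, k : ℝ² → ℝ bounded, continuous at 0 with k(0) = 1, and h_T = (h_{T1}, h_{T2}) → 0 with h_{Tk}d_k → ∞. Then the bias of the lag-window estimator vanishes uniformly: sup_λ |(4π²)^{-1} Σ_{|j₁|<d₁,|j₂|<d₂} ((d₁−|j₁|)(d₂−|j₂|)/(d₁d₂)) γ(j) k(j₁h_{T1}, j₂h_{T2}) e^{-ij'λ} − (4π²)^{-1} Σ_{j∈ℤ²} γ(j) e^{-ij'λ}| → 0 as d₁, d₂ → ∞, provided additionally sup_x |k(x)| ≤ C*. -/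
/-!
Extend the tapered, windowed autocovariances `F_n j` by zero outside the box of lags
`|j₁| < d₁, |j₂| < d₂`. They are dominated by `C* |γ j|`, and for each fixed lag they converge
to `γ j`: the box eventually contains `j`, the triangular weights tend to `1`, and
`k (j₁ h₁, j₂ h₂) → k 0 = 1`. Since every phase `e^{-i j'λ}` has modulus one, the bias at any
frequency `λ` is at most `(4π²)⁻¹ ∑_j |F_n j - γ j|`, which tends to `0` by dominated
convergence for series.
-/

open Filter Finset Topology

section DominatedSeries

variable {α ι Λ 𝕜 : Type*} [NormedRing 𝕜] [CompleteSpace 𝕜]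

theorem norm_tsum_mul_sub_tsum_mul_le {F g e : ι → 𝕜} (he : ∀ j, ‖e j‖ ≤ 1)
    (hF : Summable fun j => ‖F j‖) (hg : Summable fun j => ‖g j‖) :
    ‖∑' j, F j * e j - ∑' j, g j * e j‖ ≤ ∑' j, ‖F j - g j‖ := by
  have summable_mul {u : ι → 𝕜} (hu : Summable fun j => ‖u j‖) : Summable fun j => u j * e j :=
    .of_norm_bounded hu fun j =>
      (norm_mul_le _ _).trans (mul_le_of_le_one_right (norm_nonneg _) (he j))
  rw [← (summable_mul hF).tsum_sub (summable_mul hg)]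
  refine tsum_of_norm_bounded (Summable.of_norm_bounded (hF.add hg) fun j => ?_).hasSum
    fun j => ?_
  · simpa only [norm_norm] using norm_sub_le (F j) (g j)
  · rw [← sub_mul]
    exact (norm_mul_le _ _).trans (mul_le_of_le_one_right (norm_nonneg _) (he j))

theorem tendsto_iSup_norm_tsum_mul_sub_of_dominated {L : Filter α} [L.NeBot]
    {F : α → ι → 𝕜} {g : ι → 𝕜} {bound : ι → ℝ} {e : Λ → ι → 𝕜}
    (he : ∀ l j, ‖e l j‖ ≤ 1) (hbound : Summable bound) (hFb : ∀ n j, ‖F n j‖ ≤ bound j)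
    (hFg : ∀ j, Tendsto (F · j) L (𝓝 (g j))) :
    Tendsto (fun n => ⨆ l, ‖∑' j, F n j * e l j - ∑' j, g j * e l j‖) L (𝓝 0) := by
  have hgb (j : ι) : ‖g j‖ ≤ bound j := le_of_tendsto (hFg j).norm (.of_forall (hFb · j))
  have hF (n : α) : Summable fun j => ‖F n j‖ :=
    .of_nonneg_of_le (fun _ => norm_nonneg _) (hFb n) hbound
  have hg : Summable fun j => ‖g j‖ := .of_nonneg_of_le (fun _ => norm_nonneg _) hgb hbound
  have herr : Tendsto (fun n => ∑' j, ‖F n j - g j‖) L (𝓝 0) := by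
    have := tendsto_tsum_of_dominated_convergence (hbound.add hbound)
      (fun j => ((hFg j).sub_const (g j)).norm)
      (.of_forall fun n j => by
        simpa only [norm_norm] using (norm_sub_le _ _).trans (add_le_add (hFb n j) (hgb j)))
    simpa using this
  refine squeeze_zero (fun n => Real.iSup_nonneg fun l => norm_nonneg _) (fun n => ?_) herr
  exact Real.iSup_le (fun l => norm_tsum_mul_sub_tsum_mul_le (he l) (hF n) hg)
    (tsum_nonneg fun _ => norm_nonneg _)

end DominatedSeries

section LagWindow

variable {α : Type*} {L : Filter α}

noncomputable def lagBox (d1 d2 : ℕ) : Finset (ℤ × ℤ) :=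
  Icc (-(d1 : ℤ) + 1) ((d1 : ℤ) - 1) ×ˢ Icc (-(d2 : ℤ) + 1) ((d2 : ℤ) - 1)

theorem mem_lagBox {d1 d2 : ℕ} {j : ℤ × ℤ} : j ∈ lagBox d1 d2 ↔ |j.1| < d1 ∧ |j.2| < d2 := by
  simp only [lagBox, mem_product, mem_Icc, abs_lt]
  omega

theorem eventually_mem_lagBox {d1 d2 : α → ℕ} (hd1 : Tendsto d1 L atTop)
    (hd2 : Tendsto d2 L atTop) (j : ℤ × ℤ) : ∀ᶠ n in L, j ∈ lagBox (d1 n) (d2 n) := by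
  filter_upwards [hd1.eventually_gt_atTop j.1.natAbs, hd2.eventually_gt_atTop j.2.natAbs]
    with n hn1 hn2
  rw [mem_lagBox, Int.abs_eq_natAbs, Int.abs_eq_natAbs]
  exact ⟨by exact_mod_cast hn1, by exact_mod_cast hn2⟩

noncomputable def lagWindowCoeff (γ : ℤ × ℤ → ℝ) (k : ℝ × ℝ → ℝ) (d1 d2 : ℕ) (h1 h2 : ℝ)
    (j : ℤ × ℤ) : ℝ :=
  if j ∈ lagBox d1 d2 then
    ((d1 : ℝ) - |(j.1 : ℝ)|) * ((d2 : ℝ) - |(j.2 : ℝ)|) / ((d1 : ℝ) * (d2 : ℝ)) * γ j *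
      k ((j.1 : ℝ) * h1, (j.2 : ℝ) * h2)
  else 0

theorem abs_sub_mul_sub_div_mul_le_one {a b x y : ℝ} (hx : 0 ≤ x) (hxa : x ≤ a) (hy : 0 ≤ y)
    (hyb : y ≤ b) : |(a - x) * (b - y) / (a * b)| ≤ 1 := by
  have hnum : 0 ≤ (a - x) * (b - y) := mul_nonneg (by linarith) (by linarith)
  rw [abs_of_nonneg (div_nonneg hnum (mul_nonneg (hx.trans hxa) (hy.trans hyb)))]
  exact div_le_one_of_le₀ (mul_le_mul (by linarith) (by linarith) (by linarith) (hx.trans hxa))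
    (mul_nonneg (hx.trans hxa) (hy.trans hyb))

theorem abs_lagWindowCoeff_le {γ : ℤ × ℤ → ℝ} {k : ℝ × ℝ → ℝ} {C : ℝ} (hk : ∀ x, |k x| ≤ C)
    (d1 d2 : ℕ) (h1 h2 : ℝ) (j : ℤ × ℤ) : |lagWindowCoeff γ k d1 d2 h1 h2 j| ≤ C * |γ j| := by
  have hC : 0 ≤ C := (abs_nonneg _).trans (hk 0)
  unfold lagWindowCoeff
  split_ifs with hj
  · obtain ⟨hj1, hj2⟩ := mem_lagBox.1 hj
    have hw := abs_sub_mul_sub_div_mul_le_one (a := d1) (b := d2) (abs_nonneg (j.1 : ℝ))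
      (by rw [← Int.cast_abs]; exact_mod_cast hj1.le) (abs_nonneg (j.2 : ℝ))
      (by rw [← Int.cast_abs]; exact_mod_cast hj2.le)
    rw [abs_mul, abs_mul, mul_comm C]
    exact mul_le_mul (mul_le_of_le_one_left (abs_nonneg _) hw) (hk _) (abs_nonneg _)
      (abs_nonneg _)
  · simpa using mul_nonneg hC (abs_nonneg (γ j))

theorem tendsto_sub_div_self {f : α → ℝ} (hf : Tendsto f L atTop) (c : ℝ) :
    Tendsto (fun n => (f n - c) / f n) L (𝓝 1) := by
  have h : Tendsto (fun n => 1 - c / f n) L (𝓝 1) := by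
    simpa using tendsto_const_nhds.sub (tendsto_const_nhds.div_atTop hf)
  refine h.congr' ?_
  filter_upwards [hf.eventually_ne_atTop 0] with n hn
  field_simp

theorem tendsto_lagWindowCoeff (γ : ℤ × ℤ → ℝ) {k : ℝ × ℝ → ℝ} (hkc : ContinuousAt k 0)
    (hk0 : k 0 = 1) {d1 d2 : α → ℕ} (hd1 : Tendsto d1 L atTop) (hd2 : Tendsto d2 L atTop)
    {h1 h2 : α → ℝ} (hh1 : Tendsto h1 L (𝓝 0)) (hh2 : Tendsto h2 L (𝓝 0)) (j : ℤ × ℤ) :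
    Tendsto (fun n => lagWindowCoeff γ k (d1 n) (d2 n) (h1 n) (h2 n) j) L (𝓝 (γ j)) := by
  have hw : Tendsto (fun n => ((d1 n : ℝ) - |(j.1 : ℝ)|) * ((d2 n : ℝ) - |(j.2 : ℝ)|) /
      ((d1 n : ℝ) * (d2 n : ℝ))) L (𝓝 1) := by
    simp_rw [mul_div_mul_comm]
    simpa using (tendsto_sub_div_self (tendsto_natCast_atTop_iff.2 hd1) _).mul
      (tendsto_sub_div_self (tendsto_natCast_atTop_iff.2 hd2) _)
  have hk : Tendsto (fun n => k ((j.1 : ℝ) * h1 n, (j.2 : ℝ) * h2 n)) L (𝓝 1) := by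
    rw [← hk0]
    refine hkc.tendsto.comp ?_
    have := (hh1.const_mul (j.1 : ℝ)).prodMk_nhds (hh2.const_mul (j.2 : ℝ))
    rwa [mul_zero, mul_zero, Prod.mk_zero_zero] at this
  refine (by simpa using (hw.mul_const (γ j)).mul hk : Tendsto _ L (𝓝 (γ j))).congr' ?_
  filter_upwards [eventually_mem_lagBox hd1 hd2 j] with n hn
  simp only [lagWindowCoeff, if_pos hn]

theorem sum_lagBox_mul_eq_tsum (γ : ℤ × ℤ → ℝ) (k : ℝ × ℝ → ℝ) (d1 d2 : ℕ) (h1 h2 : ℝ)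
    (e : ℤ × ℤ → ℂ) :
    ∑ j ∈ lagBox d1 d2, ((((d1 : ℝ) - |(j.1 : ℝ)|) * ((d2 : ℝ) - |(j.2 : ℝ)|) /
        ((d1 : ℝ) * (d2 : ℝ)) * γ j * k ((j.1 : ℝ) * h1, (j.2 : ℝ) * h2) : ℝ) : ℂ) * e j =
      ∑' j, (lagWindowCoeff γ k d1 d2 h1 h2 j : ℂ) * e j := by
  rw [tsum_eq_sum (s := lagBox d1 d2) fun j hj => by simp [lagWindowCoeff, hj]]
  exact sum_congr rfl fun j hj => by rw [lagWindowCoeff, if_pos hj]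

end LagWindow

theorem lag_window_bias_uniformly_vanishes_general
    (γ : ℤ × ℤ → ℝ) (hγ : Summable fun j : ℤ × ℤ => |γ j|)
    (k : ℝ × ℝ → ℝ) (Cstar : ℝ) (hkb : ∀ x, |k x| ≤ Cstar)
    (hkc : ContinuousAt k 0) (hk0 : k 0 = 1)
    (d1 d2 : ℕ → ℕ) (hd1 : Tendsto (fun n => (d1 n : ℝ)) atTop atTop)
    (hd2 : Tendsto (fun n => (d2 n : ℝ)) atTop atTop)
    (h1 h2 : ℕ → ℝ)
    (hh10 : Tendsto h1 atTop (nhds 0)) (hh20 : Tendsto h2 atTop (nhds 0)) :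
    Tendsto (fun n =>
        ⨆ l : ℝ × ℝ,
          ‖((4 * Real.pi ^ 2 : ℝ) : ℂ)⁻¹ *
              (∑ j ∈ (Finset.Icc (-(d1 n : ℤ) + 1) ((d1 n : ℤ) - 1)) ×ˢ
                  (Finset.Icc (-(d2 n : ℤ) + 1) ((d2 n : ℤ) - 1)),
                ((((d1 n : ℝ) - |(j.1 : ℝ)|) * ((d2 n : ℝ) - |(j.2 : ℝ)|) /
                      ((d1 n : ℝ) * (d2 n : ℝ)) * γ j *
                    k ((j.1 : ℝ) * h1 n, (j.2 : ℝ) * h2 n) : ℝ) : ℂ) *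
                  Complex.exp (-Complex.I * (((j.1 : ℝ) * l.1 + (j.2 : ℝ) * l.2) : ℝ))) -
            ((4 * Real.pi ^ 2 : ℝ) : ℂ)⁻¹ *
              ∑' j : ℤ × ℤ,
                ((γ j : ℝ) : ℂ) *
                  Complex.exp (-Complex.I * (((j.1 : ℝ) * l.1 + (j.2 : ℝ) * l.2) : ℝ))‖)
      atTop (nhds 0) := by
  have hcoeff := tendsto_lagWindowCoeff γ hkc hk0 (tendsto_natCast_atTop_iff.1 hd1)
    (tendsto_natCast_atTop_iff.1 hd2) hh10 hh20
  have bias := tendsto_iSup_norm_tsum_mul_sub_of_dominated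
    (F := fun n j => (lagWindowCoeff γ k (d1 n) (d2 n) (h1 n) (h2 n) j : ℂ))
    (e := fun (l : ℝ × ℝ) (j : ℤ × ℤ) =>
      Complex.exp (-Complex.I * (((j.1 : ℝ) * l.1 + (j.2 : ℝ) * l.2) : ℝ)))
    (fun l j => by simp [Complex.norm_exp]) (hγ.mul_left Cstar)
    (fun n j => by simpa using abs_lagWindowCoeff_le hkb _ _ _ _ j)
    (fun j => (hcoeff j).ofReal)
  have scaled := bias.const_mul ‖((4 * Real.pi ^ 2 : ℝ) : ℂ)⁻¹‖
  rw [mul_zero] at scaled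
  refine scaled.congr fun n => ?_
  rw [Real.mul_iSup_of_nonneg (norm_nonneg _)]
  refine iSup_congr fun l => ?_
  rw [← norm_mul, mul_sub, ← sum_lagBox_mul_eq_tsum]
  rfl

/-- Uniform vanishing of the bias of the lag-window spectral estimator: for absolutely
summable `γ`, bounded `k` continuous at `0` with `k(0) = 1`, bandwidths `h → 0` with
`h·d → ∞`, one has
`sup_λ |(4π²)⁻¹ Σ_{|jᵢ|<dᵢ} ((d₁−|j₁|)(d₂−|j₂|)/(d₁d₂)) γ(j) k(j₁h₁,j₂h₂) e^{-ij'λ}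
        − (4π²)⁻¹ Σ_{j∈ℤ²} γ(j) e^{-ij'λ}| → 0`. -/
theorem lag_window_bias_uniformly_vanishes
    (γ : ℤ × ℤ → ℝ) (hγ : Summable fun j : ℤ × ℤ => |γ j|)
    (k : ℝ × ℝ → ℝ) (Cstar : ℝ) (hkb : ∀ x, |k x| ≤ Cstar)
    (hkc : ContinuousAt k 0) (hk0 : k 0 = 1)
    (d1 d2 : ℕ → ℕ) (hd1 : Tendsto (fun n => (d1 n : ℝ)) atTop atTop)
    (hd2 : Tendsto (fun n => (d2 n : ℝ)) atTop atTop)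
    (h1 h2 : ℕ → ℝ) (hh1p : ∀ n, 0 < h1 n) (hh2p : ∀ n, 0 < h2 n)
    (hh10 : Tendsto h1 atTop (nhds 0)) (hh20 : Tendsto h2 atTop (nhds 0))
    (hh1d : Tendsto (fun n => h1 n * d1 n) atTop atTop)
    (hh2d : Tendsto (fun n => h2 n * d2 n) atTop atTop) :
    Tendsto (fun n =>
        ⨆ l : ℝ × ℝ,
          ‖((4 * Real.pi ^ 2 : ℝ) : ℂ)⁻¹ *
              (∑ j ∈ (Finset.Icc (-(d1 n : ℤ) + 1) ((d1 n : ℤ) - 1)) ×ˢ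
                  (Finset.Icc (-(d2 n : ℤ) + 1) ((d2 n : ℤ) - 1)),
                ((((d1 n : ℝ) - |(j.1 : ℝ)|) * ((d2 n : ℝ) - |(j.2 : ℝ)|) /
                      ((d1 n : ℝ) * (d2 n : ℝ)) * γ j *
                    k ((j.1 : ℝ) * h1 n, (j.2 : ℝ) * h2 n) : ℝ) : ℂ) *
                  Complex.exp (-Complex.I * (((j.1 : ℝ) * l.1 + (j.2 : ℝ) * l.2) : ℝ))) -
            ((4 * Real.pi ^ 2 : ℝ) : ℂ)⁻¹ *
              ∑' j : ℤ × ℤ,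
                ((γ j : ℝ) : ℂ) *
                  Complex.exp (-Complex.I * (((j.1 : ℝ) * l.1 + (j.2 : ℝ) * l.2) : ℝ))‖)
      atTop (nhds 0) :=
  lag_window_bias_uniformly_vanishes_general γ hγ k Cstar hkb hkc hk0 d1 d2 hd1 hd2 h1 h2 hh10 hh20
end
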